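/- Let m ≠ 0, λ, and κ ≠ 0 be real constants. Consider on ℝ⁴ with coordinates (τ,x,y,z) the Bianchi III metric g = diag(−e^{mκτ}, e^{mκτ}, e^{m(κ−1)τ}, e^{m(κ−λ)τ}e^{−2x}). Then the vector field L₁ with components (2/m, 0, y, λz) is a homothetic vector of g with constant conformal factor ψ ≡ κ. -/

import Mathlib

open Real

/-- Partial derivative of a scalar function on `ℝⁿ` with respect to the `c`-th coordinate. -/
noncomputable def pd {n : ℕ} (f : (Fin n → ℝ) → ℝ) (c : Fin n) (p : Fin n → ℝ) : ℝ :=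
  fderiv ℝ f p (Pi.single c 1)


lemma hasFDerivAt_exp_lin {n : ℕ} (k : ℝ) (i : Fin n) (p : Fin n → ℝ) :
    HasFDerivAt (fun q : Fin n → ℝ => Real.exp (k * q i))
      (Real.exp (k * p i) • (k • (ContinuousLinearMap.proj i : (Fin n → ℝ) →L[ℝ] ℝ))) p :=
  (((ContinuousLinearMap.proj i : (Fin n → ℝ) →L[ℝ] ℝ).hasFDerivAt (x := p)).const_mul k).exp

lemma pd_exp_lin {n : ℕ} (k : ℝ) (i c : Fin n) (p : Fin n → ℝ) :
    pd (fun q => Real.exp (k * q i)) c p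
      = Real.exp (k * p i) * (k * (Pi.single c 1 : Fin n → ℝ) i) := by
  simp [pd, (hasFDerivAt_exp_lin k i p).fderiv]

lemma pd_neg_exp_lin {n : ℕ} (k : ℝ) (i c : Fin n) (p : Fin n → ℝ) :
    pd (fun q => -Real.exp (k * q i)) c p
      = -(Real.exp (k * p i) * (k * (Pi.single c 1 : Fin n → ℝ) i)) := by
  have h : HasFDerivAt (fun q : Fin n → ℝ => -Real.exp (k * q i)) _ p := (hasFDerivAt_exp_lin k i p).neg
  rw [pd, h.fderiv]; simp

lemma pd_exp_mul_exp {n : ℕ} (k l : ℝ) (i j c : Fin n) (p : Fin n → ℝ) :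
    pd (fun q => Real.exp (k * q i) * Real.exp (l * q j)) c p
      = Real.exp (k * p i) * (Real.exp (l * p j) * (l * (Pi.single c 1 : Fin n → ℝ) j))
        + Real.exp (l * p j) * (Real.exp (k * p i) * (k * (Pi.single c 1 : Fin n → ℝ) i)) := by
  have h : HasFDerivAt (fun q : Fin n → ℝ => Real.exp (k * q i) * Real.exp (l * q j)) _ p :=
    (hasFDerivAt_exp_lin k i p).mul (hasFDerivAt_exp_lin l j p)
  rw [pd, h.fderiv]; simp

lemma pd_const {n : ℕ} (r : ℝ) (c : Fin n) (p : Fin n → ℝ) :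
    pd (fun _ => r) c p = 0 := by simp [pd]

lemma pd_coord {n : ℕ} (i c : Fin n) (p : Fin n → ℝ) :
    pd (fun q => q i) c p = (Pi.single c 1 : Fin n → ℝ) i := by
  have h : HasFDerivAt (fun q : Fin n → ℝ => q i)
      (ContinuousLinearMap.proj i : (Fin n → ℝ) →L[ℝ] ℝ) p :=
    (ContinuousLinearMap.proj i : (Fin n → ℝ) →L[ℝ] ℝ).hasFDerivAt
  simp [pd, h.fderiv]

lemma pd_const_mul_coord {n : ℕ} (r : ℝ) (i c : Fin n) (p : Fin n → ℝ) :
    pd (fun q => r * q i) c p = r * (Pi.single c 1 : Fin n → ℝ) i := by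
  have h : HasFDerivAt (fun q : Fin n → ℝ => r * q i)
      (r • (ContinuousLinearMap.proj i : (Fin n → ℝ) →L[ℝ] ℝ)) p :=
    ((ContinuousLinearMap.proj i : (Fin n → ℝ) →L[ℝ] ℝ).hasFDerivAt).const_mul r
  simp [pd, h.fderiv]


lemma pd_exp_mul_exp_neg {n : ℕ} (k l : ℝ) (i j c : Fin n) (p : Fin n → ℝ) :
    pd (fun q => Real.exp (k * q i) * Real.exp (-(l * q j))) c p
      = Real.exp (k * p i) * (Real.exp (-(l * p j)) * (-l * (Pi.single c 1 : Fin n → ℝ) j))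
        + Real.exp (-(l * p j)) * (Real.exp (k * p i) * (k * (Pi.single c 1 : Fin n → ℝ) i)) := by
  simpa [neg_mul] using pd_exp_mul_exp k (-l) i j c p

/-- `X` is a conformal Killing vector of the metric `g` with conformal factor `ψ`:
for all indices `a b` and all points `p`,
`Σ_c [X^c ∂_c g_{ab} + g_{cb} ∂_a X^c + g_{ac} ∂_b X^c] = 2 ψ g_{ab}`. -/
def IsCKV {n : ℕ} (g : (Fin n → ℝ) → Matrix (Fin n) (Fin n) ℝ)
    (X : (Fin n → ℝ) → (Fin n → ℝ)) (ψ : (Fin n → ℝ) → ℝ) : Prop :=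
  ∀ (a b : Fin n) (p : Fin n → ℝ),
    (∑ c, (X p c * pd (fun q => g q a b) c p
      + g p c b * pd (fun q => X q c) a p
      + g p a c * pd (fun q => X q c) b p)) = 2 * ψ p * g p a b

/-- `L₁ = (2/m, 0, y, λz)` is a homothetic vector of the Bianchi III
metric `g = diag(−e^{mκτ}, e^{mκτ}, e^{m(κ−1)τ}, e^{m(κ−λ)τ}e^{−2x})` with constant
conformal factor `κ`. -/
theorem L1_is_HV_BianchiIII (m lam kap : ℝ) (hm : m ≠ 0) (hkap : kap ≠ 0) :
    IsCKV
      (fun p : Fin 4 → ℝ =>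
        Matrix.diagonal
          ![-Real.exp (m * kap * p 0),
            Real.exp (m * kap * p 0),
            Real.exp (m * (kap - 1) * p 0),
            Real.exp (m * (kap - lam) * p 0) * Real.exp (-2 * p 1)])
      (fun p : Fin 4 → ℝ => ![2 / m, 0, p 2, lam * p 3])
      (fun _ => kap) := by
  intro a b p
  fin_cases a <;> fin_cases b <;>
    simp [Fin.sum_univ_four, Matrix.diagonal_apply, Pi.single_apply,
      pd_exp_lin, pd_neg_exp_lin, pd_exp_mul_exp, pd_exp_mul_exp_neg, pd_const, pd_coord, pd_const_mul_coord] <;>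
    field_simp <;> ring
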